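/- arXiv:1603.00336 — 2 statements merged into one kernel-verified Lean document; each statement's English description precedes it below -/
import Mathlib

section
/- Under the assumptions of the Petrov-Galerkin projection (A norm-isomorphism, discrete inf-sup condition α_{V_r,W_r} > 0, u_r the Petrov-Galerkin projection of u = A⁻¹b onto V_r with test space W_r), for a bounded linear operator L ∈ L(V, Z) with Z a Hilbert space, the variable of interest s = Lu satisfies ‖s − L u_r‖_Z ≤ δ^L_{W_r} · (1 − δ_{V_r,W_r}²)^{-1/2} · inf_{v∈V_r} ‖u − v‖_V, where δ^L_{W_r} = sup_{0≠z'∈Z'} inf_{y∈W_r} ‖L* z' − A* y‖_{V'} / ‖z'‖_{Z'}. -/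
/-!
Write `T = R_V⁻¹ A* : W → V` and `K = T(W_r)`. Galerkin orthogonality says exactly that
`e = u - u_r` is orthogonal to `K`, and `δ_{V_r,W_r}` is the gap from `V_r` to `K`. Hence for
`v ∈ V_r` the cross term in `‖u - v‖² = ‖e + (u_r - v)‖²` is at least `-2δ‖e‖‖u_r - v‖`, and
completing the square gives `(1 - δ²)‖e‖² ≤ ‖u - v‖²`. The inf-sup condition keeps
`‖P_K v‖ ≥ (α/‖A‖)‖v‖` on `V_r`, which forces `δ < 1`. Finally, for a functional `z'` norming
`L e` and any `y ∈ W_r`, `(z' ∘ L - A* y) e = z' (L e)`, so `‖L e‖ ≤ δ^L_{W_r} ‖e‖`.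
-/

noncomputable section
open InnerProductSpace
open scoped RealInnerProductSpace

namespace PetrovGalerkin

section Gap

variable {V : Type*} [NormedAddCommGroup V] [InnerProductSpace ℝ V]

/-- The one-sided gap `sup_{v ∈ Vr, ‖v‖ = 1} dist(v, K)` (it is `0` when `Vr = ⊥`). -/
def gap (Vr K : Submodule ℝ V) [K.HasOrthogonalProjection] : ℝ :=
  ⨆ v : {v : Vr // (v : V) ≠ 0}, ‖(v.1 : V) - K.starProjection v.1‖ / ‖(v.1 : V)‖

variable {Vr K : Submodule ℝ V} [K.HasOrthogonalProjection]

theorem norm_sub_starProjection_le (v : V) : ‖v - K.starProjection v‖ ≤ ‖v‖ := by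
  simpa [Submodule.starProjection_orthogonal] using Kᗮ.norm_starProjection_apply_le v

theorem gap_nonneg : 0 ≤ gap Vr K :=
  Real.iSup_nonneg fun _ => div_nonneg (norm_nonneg _) (norm_nonneg _)

theorem norm_sub_starProjection_le_gap_mul {v : V} (hv : v ∈ Vr) :
    ‖v - K.starProjection v‖ ≤ gap Vr K * ‖v‖ := by
  rcases eq_or_ne v 0 with rfl | hv0
  · simp
  have hbdd : BddAbove (Set.range fun v : {v : Vr // (v : V) ≠ 0} =>
      ‖(v.1 : V) - K.starProjection v.1‖ / ‖(v.1 : V)‖) := by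
    refine ⟨1, ?_⟩
    rintro _ ⟨w, rfl⟩
    exact div_le_one_of_le₀ (norm_sub_starProjection_le _) (norm_nonneg _)
  rw [← div_le_iff₀ (norm_pos_iff.2 hv0)]
  exact le_ciSup hbdd (⟨⟨v, hv⟩, hv0⟩ : {v : Vr // (v : V) ≠ 0})

theorem norm_sub_starProjection_le_sqrt_mul {β : ℝ} (hβ : 0 ≤ β) {v : V}
    (hv : β * ‖v‖ ≤ ‖K.starProjection v‖) :
    ‖v - K.starProjection v‖ ≤ √(1 - β ^ 2) * ‖v‖ := by
  have hpyth : ‖v‖ ^ 2 = ‖K.starProjection v‖ ^ 2 + ‖v - K.starProjection v‖ ^ 2 := by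
    simpa [Submodule.starProjection_orthogonal] using K.norm_sq_eq_add_norm_sq_starProjection v
  have hsq : ‖v - K.starProjection v‖ ^ 2 ≤ (1 - β ^ 2) * ‖v‖ ^ 2 := by
    nlinarith [pow_le_pow_left₀ (by positivity) hv 2]
  rw [← Real.sqrt_sq (norm_nonneg v), ← Real.sqrt_mul' _ (sq_nonneg _)]
  exact Real.le_sqrt_of_sq_le hsq

theorem gap_lt_one {β : ℝ} (hβ : 0 < β) (h : ∀ v ∈ Vr, β * ‖v‖ ≤ ‖K.starProjection v‖) :
    gap Vr K < 1 := by
  have hle : gap Vr K ≤ √(1 - β ^ 2) := by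
    refine Real.iSup_le (fun v => ?_) (Real.sqrt_nonneg _)
    rw [div_le_iff₀ (norm_pos_iff.2 v.2)]
    exact norm_sub_starProjection_le_sqrt_mul hβ.le (h _ v.1.2)
  refine hle.trans_lt ((Real.sqrt_lt' one_pos).2 ?_)
  nlinarith

theorem abs_inner_le_norm_mul_norm_sub_starProjection {e : V} (he : e ∈ Kᗮ) (w : V) :
    |⟪e, w⟫| ≤ ‖e‖ * ‖w - K.starProjection w‖ := by
  have : ⟪e, K.starProjection w⟫ = 0 :=
    Submodule.inner_left_of_mem_orthogonal (K.starProjection_apply_mem w) he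
  rw [← sub_zero ⟪e, w⟫, ← this, ← inner_sub_right]
  exact abs_real_inner_le_norm _ _

theorem norm_sq_mul_one_sub_sq_le_norm_add_sq {e w : V} {δ : ℝ}
    (h : |⟪e, w⟫| ≤ δ * ‖e‖ * ‖w‖) : ‖e‖ ^ 2 * (1 - δ ^ 2) ≤ ‖e + w‖ ^ 2 := by
  rw [norm_add_sq_real]
  nlinarith [neg_abs_le ⟪e, w⟫, sq_nonneg (‖w‖ - δ * ‖e‖)]

theorem sqrt_one_sub_gap_sq_mul_norm_sub_le_iInf {u ur : V} (he : u - ur ∈ Kᗮ) (hur : ur ∈ Vr)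
    (hgap : gap Vr K < 1) :
    √(1 - gap Vr K ^ 2) * ‖u - ur‖ ≤ ⨅ v : Vr, ‖u - v‖ := by
  refine le_ciInf fun v => ?_
  have hw : ur - v ∈ Vr := Vr.sub_mem hur v.2
  have hinner : |⟪u - ur, ur - v⟫| ≤ gap Vr K * ‖u - ur‖ * ‖ur - v‖ := by
    calc |⟪u - ur, ur - v⟫| ≤ ‖u - ur‖ * ‖ur - v - K.starProjection (ur - v)‖ :=
          abs_inner_le_norm_mul_norm_sub_starProjection he _
      _ ≤ ‖u - ur‖ * (gap Vr K * ‖ur - v‖) := by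
          gcongr; exact norm_sub_starProjection_le_gap_mul hw
      _ = gap Vr K * ‖u - ur‖ * ‖ur - v‖ := by ring
  have hsq := norm_sq_mul_one_sub_sq_le_norm_add_sq hinner
  rw [sub_add_sub_cancel] at hsq
  have h1 : 0 ≤ 1 - gap Vr K ^ 2 := by nlinarith [gap_nonneg (Vr := Vr) (K := K)]
  rw [← pow_le_pow_iff_left₀ (by positivity) (norm_nonneg _) two_ne_zero, mul_pow,
    Real.sq_sqrt h1]
  linarith

end Gap

section InfSup

variable {V W : Type*} [NormedAddCommGroup V] [InnerProductSpace ℝ V] [CompleteSpace V]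
  [NormedAddCommGroup W] [NormedSpace ℝ W]

/-- The operator `R_V⁻¹ A* : W → V`. -/
def rieszAdjoint (A : V →L[ℝ] StrongDual ℝ W) : W →ₗ[ℝ] V :=
  (toDual ℝ V).symm.toLinearEquiv.toLinearMap ∘ₗ A.flip.toLinearMap

def infSupConstant (A : V →L[ℝ] StrongDual ℝ W) (Vr : Submodule ℝ V) (Wr : Submodule ℝ W) : ℝ :=
  ⨅ v : {v : Vr // (v : V) ≠ 0}, ⨆ y : {y : Wr // (y : W) ≠ 0},
    A (v.1 : V) (y.1 : W) / (‖(v.1 : V)‖ * ‖(y.1 : W)‖)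

variable (A : V →L[ℝ] StrongDual ℝ W)

theorem rieszAdjoint_apply (y : W) : rieszAdjoint A y = (toDual ℝ V).symm (A.flip y) := rfl

theorem inner_rieszAdjoint_apply (y : W) (x : V) : ⟪rieszAdjoint A y, x⟫ = A x y := by
  simp [rieszAdjoint]

theorem norm_rieszAdjoint_apply_le (y : W) : ‖rieszAdjoint A y‖ ≤ ‖A‖ * ‖y‖ := by
  rw [rieszAdjoint_apply, LinearIsometryEquiv.norm_map, ← A.opNorm_flip]
  exact A.flip.le_opNorm y

variable {A} {Vr : Submodule ℝ V} {Wr : Submodule ℝ W}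

theorem mem_orthogonal_map_rieszAdjoint {e : V} (he : ∀ y ∈ Wr, A e y = 0) :
    e ∈ (Wr.map (rieszAdjoint A))ᗮ := by
  rintro _ ⟨y, hy, rfl⟩
  rw [inner_rieszAdjoint_apply]
  exact he y hy

variable [(Wr.map (rieszAdjoint A)).HasOrthogonalProjection]

theorem iInf_norm_sub_rieszAdjoint_div (v : V) :
    ⨅ y : Wr, ‖v - rieszAdjoint A y‖ / ‖v‖ =
      ‖v - (Wr.map (rieszAdjoint A)).starProjection v‖ / ‖v‖ := by
  set K := Wr.map (rieszAdjoint A)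
  obtain ⟨y₀, hy₀, hPv⟩ : K.starProjection v ∈ K := K.starProjection_apply_mem v
  have hbdd : BddBelow (Set.range fun y : Wr => ‖v - rieszAdjoint A y‖ / ‖v‖) :=
    ⟨0, by rintro _ ⟨y, rfl⟩; positivity⟩
  refine le_antisymm ?_ (le_ciInf fun y => ?_)
  · simpa [hPv] using ciInf_le hbdd ⟨y₀, hy₀⟩
  · gcongr
    rw [K.starProjection_minimal]
    exact ciInf_le ⟨0, by rintro _ ⟨m, rfl⟩; positivity⟩
      (⟨rieszAdjoint A y, Submodule.mem_map_of_mem y.2⟩ : K)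

theorem apply_le_opNorm_mul_norm_starProjection (v : V) {y : W} (hy : y ∈ Wr) :
    A v y ≤ ‖A‖ * ‖y‖ * ‖(Wr.map (rieszAdjoint A)).starProjection v‖ := by
  set K := Wr.map (rieszAdjoint A)
  have horth : ⟪rieszAdjoint A y, v - K.starProjection v⟫ = 0 :=
    Submodule.inner_right_of_mem_orthogonal (Submodule.mem_map_of_mem hy)
      (K.sub_starProjection_mem_orthogonal v)
  calc A v y = ⟪rieszAdjoint A y, K.starProjection v⟫ := by
        rw [← inner_rieszAdjoint_apply, ← sub_eq_zero, ← inner_sub_right, horth]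
    _ ≤ ‖rieszAdjoint A y‖ * ‖K.starProjection v‖ := real_inner_le_norm _ _
    _ ≤ ‖A‖ * ‖y‖ * ‖K.starProjection v‖ := by gcongr; exact norm_rieszAdjoint_apply_le A y

theorem infSupConstant_mul_norm_le (hα : 0 < infSupConstant A Vr Wr) {v : V} (hv : v ∈ Vr) :
    infSupConstant A Vr Wr * ‖v‖ ≤ ‖A‖ * ‖(Wr.map (rieszAdjoint A)).starProjection v‖ := by
  rcases eq_or_ne v 0 with rfl | hv0
  · simp
  have hvpos := norm_pos_iff.2 hv0
  -- a family with a positive infimum is bounded below, since otherwise the infimum is `0`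
  have hbdd : BddBelow (Set.range fun v : {v : Vr // (v : V) ≠ 0} =>
      ⨆ y : {y : Wr // (y : W) ≠ 0}, A (v.1 : V) (y.1 : W) / (‖(v.1 : V)‖ * ‖(y.1 : W)‖)) := by
    by_contra h
    exact hα.ne' (Real.iInf_of_not_bddBelow h)
  have hsup : ⨆ y : {y : Wr // (y : W) ≠ 0}, A v (y.1 : W) / (‖v‖ * ‖(y.1 : W)‖)
      ≤ ‖A‖ * ‖(Wr.map (rieszAdjoint A)).starProjection v‖ / ‖v‖ := by
    refine Real.iSup_le (fun y => ?_) (by positivity)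
    rw [div_le_div_iff₀ (mul_pos hvpos (norm_pos_iff.2 y.2)) hvpos]
    nlinarith [apply_le_opNorm_mul_norm_starProjection (A := A) v y.1.2]
  rw [← le_div_iff₀ hvpos]
  exact (ciInf_le hbdd ⟨⟨v, hv⟩, hv0⟩).trans hsup

theorem opNorm_pos_of_infSupConstant_pos (hα : 0 < infSupConstant A Vr Wr) : 0 < ‖A‖ := by
  obtain ⟨⟨v, hv0⟩⟩ : Nonempty {v : Vr // (v : V) ≠ 0} := by
    by_contra h
    have := not_nonempty_iff.1 h
    exact hα.ne' (Real.iInf_of_isEmpty _)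
  have hle := infSupConstant_mul_norm_le (A := A) hα v.2
  refine lt_of_not_ge fun h => ?_
  rw [le_antisymm h (norm_nonneg A), zero_mul] at hle
  exact (mul_pos hα (norm_pos_iff.2 hv0)).not_ge hle

theorem gap_map_rieszAdjoint_lt_one (hα : 0 < infSupConstant A Vr Wr) :
    gap Vr (Wr.map (rieszAdjoint A)) < 1 := by
  have hA := opNorm_pos_of_infSupConstant_pos hα
  refine gap_lt_one (β := infSupConstant A Vr Wr / ‖A‖) (div_pos hα hA) fun v hv => ?_
  rw [div_mul_eq_mul_div, div_le_iff₀ hA, mul_comm _ ‖A‖]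
  exact infSupConstant_mul_norm_le hα hv

end InfSup

section Output

variable {V W Z : Type*} [NormedAddCommGroup V] [NormedSpace ℝ V] [NormedAddCommGroup W]
  [NormedSpace ℝ W] [NormedAddCommGroup Z] [NormedSpace ℝ Z]
  {A : V →L[ℝ] StrongDual ℝ W} {Wr : Submodule ℝ W}

theorem norm_apply_le_iSup_iInf_mul (L : V →L[ℝ] Z) {e : V} (he : ∀ y ∈ Wr, A e y = 0) :
    ‖L e‖ ≤ (⨆ z' : {z' : StrongDual ℝ Z // z' ≠ 0}, ⨅ y : Wr,
      ‖(z'.1).comp L - A.flip (y : W)‖ / ‖z'.1‖) * ‖e‖ := by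
  have hnonneg : ∀ z' : StrongDual ℝ Z, ∀ y : Wr, 0 ≤ ‖z'.comp L - A.flip (y : W)‖ / ‖z'‖ :=
    fun _ _ => by positivity
  rcases eq_or_ne (L e) 0 with hLe | hLe
  · rw [hLe, norm_zero]
    exact mul_nonneg (Real.iSup_nonneg fun _ => Real.iInf_nonneg fun _ => hnonneg _ _)
      (norm_nonneg e)
  have hepos : 0 < ‖e‖ := norm_pos_iff.2 fun h => hLe (by rw [h, map_zero])
  obtain ⟨g, hg1, hgLe⟩ := exists_dual_vector ℝ (L e) (norm_ne_zero_iff.2 hLe)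
  have hg0 : g ≠ 0 := fun h => by simp [h] at hg1
  have hbdd : BddAbove (Set.range fun z' : {z' : StrongDual ℝ Z // z' ≠ 0} =>
      ⨅ y : Wr, ‖(z'.1).comp L - A.flip (y : W)‖ / ‖z'.1‖) := by
    refine ⟨‖L‖, ?_⟩
    rintro _ ⟨z', rfl⟩
    refine (ciInf_le ⟨0, by rintro _ ⟨y, rfl⟩; exact hnonneg _ _⟩ 0).trans ?_
    rw [Submodule.coe_zero, map_zero, sub_zero, div_le_iff₀ (norm_pos_iff.2 z'.2), mul_comm]
    exact z'.1.opNorm_comp_le L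
  have hle : ‖L e‖ / ‖e‖ ≤ ⨅ y : Wr, ‖g.comp L - A.flip (y : W)‖ / ‖g‖ := by
    refine le_ciInf fun y => ?_
    rw [hg1, div_one, div_le_iff₀ hepos]
    calc ‖L e‖ = (g.comp L - A.flip (y : W)) e := by simp [hgLe, he y y.2]
      _ ≤ ‖g.comp L - A.flip (y : W)‖ * ‖e‖ :=
          (Real.le_norm_self _).trans (ContinuousLinearMap.le_opNorm _ _)
  rw [← div_le_iff₀ hepos]
  exact hle.trans (le_ciSup hbdd ⟨g, hg0⟩)

end Output

end PetrovGalerkin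

open PetrovGalerkin

theorem stmt_3_general {V W Z : Type*}
    [NormedAddCommGroup V] [InnerProductSpace ℝ V] [CompleteSpace V]
    [NormedAddCommGroup W] [InnerProductSpace ℝ W]
    [NormedAddCommGroup Z] [InnerProductSpace ℝ Z]
    (A : V →L[ℝ] StrongDual ℝ W)
    (b : StrongDual ℝ W) (u : V) (hu : A u = b)
    (L : V →L[ℝ] Z)
    (Vr : Submodule ℝ V) (Wr : Submodule ℝ W)
    [FiniteDimensional ℝ Wr]
    (α : ℝ)
    (hαdef : α = ⨅ v : {v : Vr // (v : V) ≠ 0}, ⨆ y : {y : Wr // (y : W) ≠ 0},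
        A (v.1 : V) (y.1 : W) / (‖(v.1 : V)‖ * ‖(y.1 : W)‖))
    (hα : 0 < α)
    (ur : V) (hurm : ur ∈ Vr) (hPG : ∀ y ∈ Wr, A ur y = b y)
    (δ : ℝ)
    (hδ : δ = ⨆ v : {v : Vr // (v : V) ≠ 0}, ⨅ y : Wr,
        ‖(v.1 : V) - (toDual ℝ V).symm (A.flip (y : W))‖ / ‖(v.1 : V)‖)
    (δL : ℝ)
    (hδL : δL = ⨆ z' : {z' : StrongDual ℝ Z // z' ≠ 0}, ⨅ y : Wr,
        ‖(z'.1).comp L - A.flip (y : W)‖ / ‖z'.1‖) :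
    ‖L u - L ur‖ ≤ δL * (Real.sqrt (1 - δ ^ 2))⁻¹ * ⨅ v : Vr, ‖u - (v : V)‖ := by
  subst hαdef hδ hδL
  set K := Wr.map (rieszAdjoint A)
  have hgap : (⨆ v : {v : Vr // (v : V) ≠ 0}, ⨅ y : Wr,
      ‖(v.1 : V) - (toDual ℝ V).symm (A.flip (y : W))‖ / ‖(v.1 : V)‖) = gap Vr K :=
    iSup_congr fun v => iInf_norm_sub_rieszAdjoint_div (v.1 : V)
  have hGalerkin : ∀ y ∈ Wr, A (u - ur) y = 0 := fun y hy => by simp [hu, hPG y hy]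
  have hgap1 : gap Vr K < 1 := gap_map_rieszAdjoint_lt_one hα
  have hsqrt : 0 < √(1 - gap Vr K ^ 2) :=
    Real.sqrt_pos.2 (by nlinarith [gap_nonneg (Vr := Vr) (K := K)])
  rw [hgap, ← map_sub, mul_assoc]
  refine (norm_apply_le_iSup_iInf_mul L hGalerkin).trans ?_
  gcongr
  · exact Real.iSup_nonneg fun _ => Real.iInf_nonneg fun _ => by positivity
  rw [le_inv_mul_iff₀ hsqrt]
  exact sqrt_one_sub_gap_sq_mul_norm_sub_le_iInf
    (mem_orthogonal_map_rieszAdjoint hGalerkin) hurm hgap1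

theorem stmt_3 {V W Z : Type*}
    [NormedAddCommGroup V] [InnerProductSpace ℝ V] [CompleteSpace V]
    [NormedAddCommGroup W] [InnerProductSpace ℝ W] [CompleteSpace W]
    [NormedAddCommGroup Z] [InnerProductSpace ℝ Z] [CompleteSpace Z]
    (A : V →L[ℝ] StrongDual ℝ W) (hA : Function.Bijective A)
    (b : StrongDual ℝ W) (u : V) (hu : A u = b)
    (L : V →L[ℝ] Z)
    (Vr : Submodule ℝ V) (Wr : Submodule ℝ W)
    [FiniteDimensional ℝ Vr] [FiniteDimensional ℝ Wr]
    (α : ℝ)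
    (hαdef : α = ⨅ v : {v : Vr // (v : V) ≠ 0}, ⨆ y : {y : Wr // (y : W) ≠ 0},
        A (v.1 : V) (y.1 : W) / (‖(v.1 : V)‖ * ‖(y.1 : W)‖))
    (hα : 0 < α)
    (ur : V) (hurm : ur ∈ Vr) (hPG : ∀ y ∈ Wr, A ur y = b y)
    (δ : ℝ)
    (hδ : δ = ⨆ v : {v : Vr // (v : V) ≠ 0}, ⨅ y : Wr,
        ‖(v.1 : V) - (toDual ℝ V).symm (A.flip (y : W))‖ / ‖(v.1 : V)‖)
    (δL : ℝ)
    (hδL : δL = ⨆ z' : {z' : StrongDual ℝ Z // z' ≠ 0}, ⨅ y : Wr,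
        ‖(z'.1).comp L - A.flip (y : W)‖ / ‖z'.1‖) :
    ‖L u - L ur‖ ≤ δL * (Real.sqrt (1 - δ ^ 2))⁻¹ * ⨅ v : Vr, ‖u - (v : V)‖ :=
  stmt_3_general A b u hu L Vr Wr α hαdef hα ur hurm hPG δ hδ δL hδL
end
end

section
/- In the saddle point setting with R_W = A R_V⁻¹ A*, the goal-oriented estimate s̃ = L u_{r,p} + L R_V⁻¹ A* y_{r,p} satisfies ‖s − s̃‖_Z ≤ δ^L_{T_p} · ‖u − u_{r,p} − R_V⁻¹A* y_{r,p}‖_V ≤ δ^L_{T_p}/(1 − δ_{V_r,T_p}²)^{1/2} · min_{v∈V_r}‖u − v‖_V, where δ^L_{T_p} = sup_{0≠z'∈Z'} min_{y∈T_p} ‖L*z' − A*y‖_{V'}/‖z'‖_{Z'}. -/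
noncomputable section
open InnerProductSpace
open scoped RealInnerProductSpace

/-!
Put `e = R_V⁻¹A* y_{r,p}` and `w = u - u_{r,p} - e`. The first saddle point equation says that
`A w` vanishes on `T_p`, i.e. `w ⟂ R_V⁻¹A* T_p`; the second says `e ⟂ V_r`.
Evaluating `L w` against a norming functional `z'` and subtracting `A* y` with `y ∈ T_p` gives the
first bound. For the second, `u - v = w + e - x` with `x = v - u_{r,p} ∈ V_r`, and `⟪w, x⟫ ≤ δ ‖w‖ ‖x‖`
because `w ⟂ R_V⁻¹A* T_p`, so Pythagoras gives `(1 - δ²) ‖w‖² ≤ ‖u - v‖²`. Finally `α > 0` forces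
`δ ≤ √(1 - α²) < 1`: the cosine of the angle between `v` and `R_V⁻¹A* y`, and the relative distance
from `v` to the line through `R_V⁻¹A* y`, are the legs of a right triangle with unit hypotenuse.
-/

lemma le_sqrt_one_sub_sq_of_le_sqrt_one_sub_sq {a b : ℝ} (ha : 0 < a)
    (h : a ≤ √(1 - b ^ 2)) : b ≤ √(1 - a ^ 2) := by
  have hb : 0 < 1 - b ^ 2 := Real.sqrt_pos.mp (ha.trans_le h)
  have hab : a ^ 2 ≤ 1 - b ^ 2 := by
    simpa [Real.sq_sqrt hb.le] using pow_le_pow_left₀ ha.le h 2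
  exact (le_abs_self b).trans (Real.abs_le_sqrt (by linarith))

section RelDist

variable {H ι : Type*} [NormedAddCommGroup H]

def relDist (g : ι → H) (v : H) : ℝ :=
  ⨅ i, ‖v - g i‖ / ‖v‖

lemma relDist_nonneg (g : ι → H) (v : H) : 0 ≤ relDist g v :=
  Real.iInf_nonneg fun _ => by positivity

lemma relDist_le (g : ι → H) (v : H) (i : ι) : relDist g v ≤ ‖v - g i‖ / ‖v‖ :=
  ciInf_le ⟨0, Set.forall_mem_range.2 fun _ => by positivity⟩ i

variable [InnerProductSpace ℝ H]

lemma inner_le_relDist_mul [Nonempty ι] {g : ι → H} {w v : H} (hw : ∀ i, ⟪w, g i⟫_ℝ = 0)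
    (hv : v ≠ 0) : ⟪w, v⟫_ℝ ≤ relDist g v * (‖w‖ * ‖v‖) := by
  have hv' : 0 < ‖v‖ := norm_pos_iff.mpr hv
  rw [relDist, Real.iInf_mul_of_nonneg (by positivity)]
  refine le_ciInf fun i => ?_
  calc ⟪w, v⟫_ℝ = ⟪w, v - g i⟫_ℝ := by rw [inner_sub_right, hw, sub_zero]
    _ ≤ ‖w‖ * ‖v - g i‖ := real_inner_le_norm _ _
    _ = ‖v - g i‖ / ‖v‖ * (‖w‖ * ‖v‖) := by field_simp

lemma inner_div_le_sqrt_one_sub_relDist_sq {g : ι → H} {v s : H} (hv : v ≠ 0)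
    (hs : ∀ t : ℝ, ∃ i, g i = t • s) :
    ⟪s, v⟫_ℝ / (‖v‖ * ‖s‖) ≤ √(1 - relDist g v ^ 2) := by
  rcases eq_or_ne s 0 with rfl | hs0
  · simp
  have hv' : 0 < ‖v‖ := norm_pos_iff.mpr hv
  have hs' : 0 < ‖s‖ := norm_pos_iff.mpr hs0
  obtain ⟨i, hi⟩ := hs (⟪s, v⟫_ℝ / ‖s‖ ^ 2)
  have hproj : ‖v - g i‖ ^ 2 = ‖v‖ ^ 2 - ⟪s, v⟫_ℝ ^ 2 / ‖s‖ ^ 2 := by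
    rw [hi, norm_sub_sq_real, inner_smul_right, norm_smul, mul_pow, Real.norm_eq_abs, sq_abs,
      real_inner_comm]
    field_simp
    ring
  have hD : relDist g v ^ 2 ≤ 1 - (⟪s, v⟫_ℝ / (‖v‖ * ‖s‖)) ^ 2 :=
    calc relDist g v ^ 2 ≤ (‖v - g i‖ / ‖v‖) ^ 2 :=
          pow_le_pow_left₀ (relDist_nonneg g v) (relDist_le g v i) 2
      _ = 1 - (⟪s, v⟫_ℝ / (‖v‖ * ‖s‖)) ^ 2 := by
          rw [div_pow, hproj]
          field_simp
  exact (le_abs_self _).trans (Real.abs_le_sqrt (by linarith))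

lemma sqrt_one_sub_sq_mul_norm_le_norm_add_sub {w e x : H} {δ : ℝ} (hwe : ⟪w, e⟫_ℝ = 0)
    (hex : ⟪e, x⟫_ℝ = 0) (hwx : ⟪w, x⟫_ℝ ≤ δ * (‖w‖ * ‖x‖)) :
    √(1 - δ ^ 2) * ‖w‖ ≤ ‖w + e - x‖ := by
  have key : (1 - δ ^ 2) * ‖w‖ ^ 2 ≤ ‖w + e - x‖ ^ 2 := by
    rw [norm_sub_sq_real, norm_add_sq_real, inner_add_left, hwe, hex]
    nlinarith [sq_nonneg (δ * ‖w‖ - ‖x‖), sq_nonneg ‖e‖]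
  calc √(1 - δ ^ 2) * ‖w‖ = √((1 - δ ^ 2) * ‖w‖ ^ 2) := by
        rw [Real.sqrt_mul' _ (sq_nonneg _), Real.sqrt_sq (norm_nonneg _)]
    _ ≤ √(‖w + e - x‖ ^ 2) := Real.sqrt_le_sqrt key
    _ = ‖w + e - x‖ := Real.sqrt_sq (norm_nonneg _)

end RelDist

section GoalApprox

variable {V W Z : Type*} [NormedAddCommGroup V] [NormedSpace ℝ V] [NormedAddCommGroup W]
  [NormedSpace ℝ W] [NormedAddCommGroup Z] [NormedSpace ℝ Z]

/-- The paper's `δ^L_{T_p}`, with `B = A*`. -/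
def goalApproxConstant (L : V →L[ℝ] Z) (B : W →L[ℝ] StrongDual ℝ V) (T : Submodule ℝ W) : ℝ :=
  ⨆ z' : {z' : StrongDual ℝ Z // z' ≠ 0}, ⨅ y : T, ‖(z'.1).comp L - B (y : W)‖ / ‖z'.1‖

lemma goalApproxConstant_nonneg (L : V →L[ℝ] Z) (B : W →L[ℝ] StrongDual ℝ V)
    (T : Submodule ℝ W) : 0 ≤ goalApproxConstant L B T :=
  Real.iSup_nonneg fun _ => Real.iInf_nonneg fun _ => by positivity

lemma bddAbove_range_goalApprox (L : V →L[ℝ] Z) (B : W →L[ℝ] StrongDual ℝ V) (T : Submodule ℝ W) :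
    BddAbove (Set.range fun z' : {z' : StrongDual ℝ Z // z' ≠ 0} =>
      ⨅ y : T, ‖(z'.1).comp L - B (y : W)‖ / ‖z'.1‖) := by
  refine ⟨‖L‖, Set.forall_mem_range.2 fun z' => ?_⟩
  have hz : 0 < ‖z'.1‖ := norm_pos_iff.mpr z'.2
  calc ⨅ y : T, ‖(z'.1).comp L - B (y : W)‖ / ‖z'.1‖
        ≤ ‖(z'.1).comp L - B ((0 : T) : W)‖ / ‖z'.1‖ :=
          ciInf_le ⟨0, Set.forall_mem_range.2 fun _ => by positivity⟩ 0
    _ ≤ ‖L‖ := by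
        rw [div_le_iff₀ hz, Submodule.coe_zero, map_zero, sub_zero, mul_comm]
        exact (z'.1).opNorm_comp_le L

lemma norm_apply_le_goalApproxConstant_mul (L : V →L[ℝ] Z) (B : W →L[ℝ] StrongDual ℝ V)
    (T : Submodule ℝ W) {w : V} (hw : ∀ y ∈ T, B y w = 0) :
    ‖L w‖ ≤ goalApproxConstant L B T * ‖w‖ := by
  rcases eq_or_ne ‖L w‖ 0 with h | h
  · rw [h]
    exact mul_nonneg (goalApproxConstant_nonneg L B T) (norm_nonneg w)
  obtain ⟨g, hg1, hg2⟩ := exists_dual_vector ℝ (L w) h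
  have hg0 : g ≠ 0 := by rintro rfl; simp at hg1
  have hbound : ∀ y : T, ‖L w‖ ≤ ‖g.comp L - B y‖ * ‖w‖ := fun y =>
    calc ‖L w‖ = (g.comp L - B y) w := by simp [hg2, hw y y.2]
      _ ≤ ‖(g.comp L - B y) w‖ := Real.le_norm_self _
      _ ≤ ‖g.comp L - B y‖ * ‖w‖ := (g.comp L - B y).le_opNorm w
  calc ‖L w‖ ≤ (⨅ y : T, ‖g.comp L - B y‖ / ‖g‖) * ‖w‖ := by
        rw [Real.iInf_mul_of_nonneg (norm_nonneg w)]
        exact le_ciInf fun y => by rw [hg1, div_one]; exact hbound y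
    _ ≤ goalApproxConstant L B T * ‖w‖ := by
        gcongr
        exact le_ciSup (bddAbove_range_goalApprox L B T) ⟨g, hg0⟩

end GoalApprox

section SaddlePoint

variable {V W : Type*} [NormedAddCommGroup V] [InnerProductSpace ℝ V] [CompleteSpace V]
  [NormedAddCommGroup W] [NormedSpace ℝ W]

/-- `R_V⁻¹ A* y`. -/
def rieszAdjoint (A : V →L[ℝ] StrongDual ℝ W) (y : W) : V :=
  (toDual ℝ V).symm (A.flip y)

lemma inner_rieszAdjoint (A : V →L[ℝ] StrongDual ℝ W) (y : W) (v : V) :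
    ⟪rieszAdjoint A y, v⟫_ℝ = A v y := by
  rw [rieszAdjoint, ← toDual_apply_apply, LinearIsometryEquiv.apply_symm_apply,
    ContinuousLinearMap.flip_apply]

lemma norm_rieszAdjoint (A : V →L[ℝ] StrongDual ℝ W) (y : W) :
    ‖rieszAdjoint A y‖ = ‖A.flip y‖ :=
  (toDual ℝ V).symm.norm_map _

lemma rieszAdjoint_smul (A : V →L[ℝ] StrongDual ℝ W) (t : ℝ) (y : W) :
    rieszAdjoint A (t • y) = t • rieszAdjoint A y := by
  simp [rieszAdjoint]

/-- The discrete inf-sup constant `α_{V_r,T_p}`. -/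
def infSupConstant (A : V →L[ℝ] StrongDual ℝ W) (Vr : Submodule ℝ V) (Tp : Submodule ℝ W) : ℝ :=
  ⨅ v : {v : Vr // (v : V) ≠ 0}, ⨆ y : {y : Tp // (y : W) ≠ 0},
    A (v.1 : V) (y.1 : W) / (‖(v.1 : V)‖ * ‖A.flip (y.1 : W)‖)

/-- The paper's `δ_{V_r,T_p}`. -/
def approxConstant (A : V →L[ℝ] StrongDual ℝ W) (Vr : Submodule ℝ V) (Tp : Submodule ℝ W) : ℝ :=
  ⨆ v : {v : Vr // (v : V) ≠ 0}, relDist (fun y : Tp => rieszAdjoint A y) (v.1 : V)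

variable {A : V →L[ℝ] StrongDual ℝ W} {Vr : Submodule ℝ V} {Tp : Submodule ℝ W}

lemma relDist_le_sqrt_one_sub_infSupConstant_sq (hα : 0 < infSupConstant A Vr Tp)
    (v : {v : Vr // (v : V) ≠ 0}) :
    relDist (fun y : Tp => rieszAdjoint A y) (v.1 : V) ≤ √(1 - infSupConstant A Vr Tp ^ 2) := by
  refine le_sqrt_one_sub_sq_of_le_sqrt_one_sub_sq hα ?_
  have hbdd : BddBelow (Set.range fun v : {v : Vr // (v : V) ≠ 0} =>
      ⨆ y : {y : Tp // (y : W) ≠ 0}, A (v.1 : V) (y.1 : W) / (‖(v.1 : V)‖ * ‖A.flip (y.1 : W)‖)) := by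
    by_contra h
    rw [infSupConstant, Real.iInf_of_not_bddBelow h] at hα
    exact lt_irrefl 0 hα
  refine (ciInf_le hbdd v).trans (Real.iSup_le (fun y => ?_) (Real.sqrt_nonneg _))
  rw [← inner_rieszAdjoint, ← norm_rieszAdjoint]
  exact inner_div_le_sqrt_one_sub_relDist_sq v.2
    fun t => ⟨t • y.1, rieszAdjoint_smul A t (y.1 : W)⟩

lemma approxConstant_nonneg : 0 ≤ approxConstant A Vr Tp :=
  Real.iSup_nonneg fun _ => relDist_nonneg _ _

lemma approxConstant_lt_one (hα : 0 < infSupConstant A Vr Tp) : approxConstant A Vr Tp < 1 :=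
  calc approxConstant A Vr Tp ≤ √(1 - infSupConstant A Vr Tp ^ 2) :=
        Real.iSup_le (relDist_le_sqrt_one_sub_infSupConstant_sq hα) (Real.sqrt_nonneg _)
    _ < 1 := by
        rw [Real.sqrt_lt' one_pos]
        nlinarith

lemma inner_le_approxConstant_mul (hα : 0 < infSupConstant A Vr Tp) {w x : V}
    (hw : ∀ y ∈ Tp, A w y = 0) (hx : x ∈ Vr) :
    ⟪w, x⟫_ℝ ≤ approxConstant A Vr Tp * (‖w‖ * ‖x‖) := by
  rcases eq_or_ne x 0 with rfl | hx0
  · simp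
  have hbdd : BddAbove (Set.range fun v : {v : Vr // (v : V) ≠ 0} =>
      relDist (fun y : Tp => rieszAdjoint A y) (v.1 : V)) :=
    ⟨_, Set.forall_mem_range.2 (relDist_le_sqrt_one_sub_infSupConstant_sq hα)⟩
  calc ⟪w, x⟫_ℝ ≤ relDist (fun y : Tp => rieszAdjoint A y) x * (‖w‖ * ‖x‖) :=
        inner_le_relDist_mul (fun y => by rw [real_inner_comm, inner_rieszAdjoint, hw y y.2]) hx0
    _ ≤ approxConstant A Vr Tp * (‖w‖ * ‖x‖) := by
        gcongr
        exact le_ciSup hbdd ⟨⟨x, hx⟩, hx0⟩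

end SaddlePoint

theorem stmt_16_general {V W Z : Type*}
    [NormedAddCommGroup V] [InnerProductSpace ℝ V] [CompleteSpace V]
    [NormedAddCommGroup W] [InnerProductSpace ℝ W]
    [NormedAddCommGroup Z] [InnerProductSpace ℝ Z]
    (A : V →L[ℝ] StrongDual ℝ W)
    (b : StrongDual ℝ W) (u : V) (hu : A u = b)
    (L : V →L[ℝ] Z)
    (Vr : Submodule ℝ V) (Tp : Submodule ℝ W)
    (α : ℝ)
    (hαdef : α = ⨅ v : {v : Vr // (v : V) ≠ 0}, ⨆ y : {y : Tp // (y : W) ≠ 0},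
        A (v.1 : V) (y.1 : W) / (‖(v.1 : V)‖ * ‖A.flip (y.1 : W)‖))
    (hα : 0 < α)
    (urp : V) (hurm : urp ∈ Vr) (yrp : W) (hyrm : yrp ∈ Tp)
    (heq1 : ∀ y ∈ Tp, A ((toDual ℝ V).symm (A.flip yrp)) y + A urp y = b y)
    (heq2 : ∀ v ∈ Vr, A.flip yrp v = 0)
    (δ : ℝ)
    (hδ : δ = ⨆ v : {v : Vr // (v : V) ≠ 0}, ⨅ y : Tp,
        ‖(v.1 : V) - (toDual ℝ V).symm (A.flip (y : W))‖ / ‖(v.1 : V)‖)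
    (δL : ℝ)
    (hδL : δL = ⨆ z' : {z' : StrongDual ℝ Z // z' ≠ 0}, ⨅ y : Tp,
        ‖(z'.1).comp L - A.flip (y : W)‖ / ‖z'.1‖) :
    ‖L u - (L urp + L ((toDual ℝ V).symm (A.flip yrp)))‖
        ≤ δL * ‖u - urp - (toDual ℝ V).symm (A.flip yrp)‖ ∧
      δL * ‖u - urp - (toDual ℝ V).symm (A.flip yrp)‖
        ≤ δL * (Real.sqrt (1 - δ ^ 2))⁻¹ * ⨅ v : Vr, ‖u - (v : V)‖ := by
  have hα' : 0 < infSupConstant A Vr Tp := by subst hαdef; exact hα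
  have hδ' : δ = approxConstant A Vr Tp := hδ
  have hδL' : δL = goalApproxConstant L A.flip Tp := hδL
  change ‖L u - (L urp + L (rieszAdjoint A yrp))‖ ≤ δL * ‖u - urp - rieszAdjoint A yrp‖ ∧
    δL * ‖u - urp - rieszAdjoint A yrp‖ ≤ δL * (√(1 - δ ^ 2))⁻¹ * ⨅ v : Vr, ‖u - (v : V)‖
  set w := u - urp - rieszAdjoint A yrp
  have hgalerkin : ∀ y ∈ Tp, A w y = 0 := fun y hy => by
    have := heq1 y hy
    simp only [w, map_sub, sub_apply, hu]
    exact sub_eq_zero.mpr (by rw [rieszAdjoint]; linarith)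
  have hquasi : ∀ v ∈ Vr, √(1 - δ ^ 2) * ‖w‖ ≤ ‖u - v‖ := fun v hv => by
    have h := sqrt_one_sub_sq_mul_norm_le_norm_add_sub (e := rieszAdjoint A yrp)
      (by rw [real_inner_comm, inner_rieszAdjoint, hgalerkin yrp hyrm])
      (by rw [inner_rieszAdjoint, ← ContinuousLinearMap.flip_apply, heq2 _ (Vr.sub_mem hv hurm)])
      (hδ' ▸ inner_le_approxConstant_mul hα' hgalerkin (Vr.sub_mem hv hurm))
    rwa [show w + rieszAdjoint A yrp - (v - urp) = u - v by simp only [w]; abel] at h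
  have hsqrt : 0 < √(1 - δ ^ 2) := Real.sqrt_pos.mpr (by
    nlinarith [hδ' ▸ approxConstant_nonneg (A := A) (Vr := Vr) (Tp := Tp),
      hδ' ▸ approxConstant_lt_one hα'])
  refine ⟨?_, ?_⟩
  · rw [show L u - (L urp + L (rieszAdjoint A yrp)) = L w by simp only [w, map_sub]; abel, hδL']
    exact norm_apply_le_goalApproxConstant_mul L A.flip Tp hgalerkin
  · rw [mul_assoc]
    gcongr
    · exact hδL' ▸ goalApproxConstant_nonneg L A.flip Tp
    · exact (le_inv_mul_iff₀ hsqrt).mpr (le_ciInf fun v => hquasi v v.2)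

theorem stmt_16 {V W Z : Type*}
    [NormedAddCommGroup V] [InnerProductSpace ℝ V] [CompleteSpace V]
    [NormedAddCommGroup W] [InnerProductSpace ℝ W] [CompleteSpace W]
    [NormedAddCommGroup Z] [InnerProductSpace ℝ Z] [CompleteSpace Z]
    (A : V →L[ℝ] StrongDual ℝ W) (hA : Function.Bijective A)
    (b : StrongDual ℝ W) (u : V) (hu : A u = b)
    (L : V →L[ℝ] Z)
    (Vr : Submodule ℝ V) (Tp : Submodule ℝ W)
    [FiniteDimensional ℝ Vr] [FiniteDimensional ℝ Tp]
    (α : ℝ)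
    (hαdef : α = ⨅ v : {v : Vr // (v : V) ≠ 0}, ⨆ y : {y : Tp // (y : W) ≠ 0},
        A (v.1 : V) (y.1 : W) / (‖(v.1 : V)‖ * ‖A.flip (y.1 : W)‖))
    (hα : 0 < α)
    (urp : V) (hurm : urp ∈ Vr) (yrp : W) (hyrm : yrp ∈ Tp)
    (heq1 : ∀ y ∈ Tp, A ((toDual ℝ V).symm (A.flip yrp)) y + A urp y = b y)
    (heq2 : ∀ v ∈ Vr, A.flip yrp v = 0)
    (δ : ℝ)
    (hδ : δ = ⨆ v : {v : Vr // (v : V) ≠ 0}, ⨅ y : Tp,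
        ‖(v.1 : V) - (toDual ℝ V).symm (A.flip (y : W))‖ / ‖(v.1 : V)‖)
    (δL : ℝ)
    (hδL : δL = ⨆ z' : {z' : StrongDual ℝ Z // z' ≠ 0}, ⨅ y : Tp,
        ‖(z'.1).comp L - A.flip (y : W)‖ / ‖z'.1‖) :
    ‖L u - (L urp + L ((toDual ℝ V).symm (A.flip yrp)))‖
        ≤ δL * ‖u - urp - (toDual ℝ V).symm (A.flip yrp)‖ ∧
      δL * ‖u - urp - (toDual ℝ V).symm (A.flip yrp)‖
        ≤ δL * (Real.sqrt (1 - δ ^ 2))⁻¹ * ⨅ v : Vr, ‖u - (v : V)‖ :=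
  stmt_16_general A b u hu L Vr Tp α hαdef hα urp hurm yrp hyrm heq1 heq2 δ hδ δL hδL
end
end
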